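/- arXiv:2009.08265 — 3 statements merged into one kernel-verified Lean document; each statement's English description precedes it below -/
import Mathlib

section
/- Let f : [0,1]^d → ℝ be twice differentiable with ‖∇²f(x)‖_∞ ≤ 2L on a cube B = ∏[c_j − h/2, c_j + h/2] ⊆ [0,1]^d. Define θ₀ = (1/h^d)∫_B f(x) dx and θ_i = (∫_B (f(x)−θ₀)(x_i−c_i) dx)/(∫_B (x_i−c_i)² dx). Then |f(x) − θ₀ − Σ_i θ_i(x_i − c_i)| ≤ (4√3 + 1) L d h² for all x ∈ B. -/
/-! The coefficients `θ` are the least-squares affine fit `cubeFit` of `f` on the cube. Since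
`1` and the `xᵢ - cᵢ` are orthogonal on the cube, this fit is linear in `f` and reproduces affine
functions, so the residual of `f` is the residual of `g = f - (f c + f'(c)(· - c))`, and
`|g| ≤ L h² / 4` on the cube. For bounded `g` the fitted constant is at most `sup |g|` and, as
`∫ (xᵢ - cᵢ)² = hᵈ h² / 12`, each fitted slope is at most `6 sup |g| / h`; the residual is thus at
most `(2 + 3d) L h² / 4`. -/

open Set MeasureTheory

section Cube

variable {ι : Type*} (c : ι → ℝ) (h : ℝ)

def cube : Set (ι → ℝ) := Icc (fun j => c j - h / 2) (fun j => c j + h / 2)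

variable {c h}

theorem abs_sub_le_of_mem_cube {x : ι → ℝ} (hx : x ∈ cube c h) (j : ι) : |x j - c j| ≤ h / 2 :=
  abs_sub_le_iff.2 ⟨by linarith [hx.2 j], by linarith [hx.1 j]⟩

theorem norm_sub_le_of_mem_cube [Fintype ι] (hh : 0 ≤ h) {x : ι → ℝ} (hx : x ∈ cube c h) :
    ‖x - c‖ ≤ h / 2 :=
  (pi_norm_le_iff_of_nonneg (by positivity)).2 fun j => abs_sub_le_of_mem_cube hx j

theorem center_mem_cube (hh : 0 ≤ h) : c ∈ cube c h :=
  ⟨fun _ => sub_le_self _ (by positivity), fun _ => le_add_of_nonneg_right (by positivity)⟩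

theorem isCompact_cube : IsCompact (cube c h) := isCompact_Icc

theorem Continuous.integrableOn_cube [Fintype ι] {g : (ι → ℝ) → ℝ} (hg : Continuous g) :
    IntegrableOn g (cube c h) :=
  hg.integrableOn_Icc

theorem setIntegral_cube_prod [Fintype ι] (G : ι → ℝ → ℝ) :
    ∫ x in cube c h, ∏ j, G j (x j) = ∏ j, ∫ t in Icc (c j - h / 2) (c j + h / 2), G j t := by
  rw [cube, ← pi_univ_Icc, volume_pi, Measure.restrict_pi_pi]
  exact integral_fintype_prod_eq_prod _

theorem integral_Icc_const_one (γ : ℝ) (hh : 0 ≤ h) :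
    ∫ _ in Icc (γ - h / 2) (γ + h / 2), (1 : ℝ) = h := by
  rw [setIntegral_const, smul_eq_mul, mul_one, Real.volume_real_Icc, max_eq_left (by linarith)]
  ring

theorem integral_Icc_sub_center (γ : ℝ) (hh : 0 ≤ h) :
    ∫ t in Icc (γ - h / 2) (γ + h / 2), (t - γ) = 0 := by
  rw [integral_Icc_eq_integral_Ioc, ← intervalIntegral.integral_of_le (by linarith),
    intervalIntegral.integral_comp_sub_right (fun t => t), integral_id]
  ring

theorem integral_Icc_sub_center_sq (γ : ℝ) (hh : 0 ≤ h) :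
    ∫ t in Icc (γ - h / 2) (γ + h / 2), (t - γ) ^ 2 = h ^ 3 / 12 := by
  rw [integral_Icc_eq_integral_Ioc, ← intervalIntegral.integral_of_le (by linarith),
    intervalIntegral.integral_comp_sub_right (fun t => t ^ 2), integral_pow]
  ring

theorem volume_real_cube [Fintype ι] (hh : 0 ≤ h) :
    volume.real (cube c h) = h ^ Fintype.card ι := by
  have := setIntegral_cube_prod (c := c) (h := h) fun _ _ => (1 : ℝ)
  simp only [Finset.prod_const_one, integral_Icc_const_one _ hh] at this
  rw [setIntegral_const, smul_eq_mul, mul_one] at this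
  rw [this, Finset.prod_const, Finset.card_univ]

theorem volume_cube_lt_top [Fintype ι] : volume (cube c h) < ⊤ := isCompact_cube.measure_lt_top

theorem setIntegral_cube_sub_center [Fintype ι] (hh : 0 ≤ h) (i : ι) :
    ∫ x in cube c h, (x i - c i) = 0 := by
  classical
  have := setIntegral_cube_prod (c := c) (h := h) fun j t => if j = i then t - c i else 1
  rw [Finset.prod_eq_zero (Finset.mem_univ i) (by simpa using integral_Icc_sub_center _ hh)]
    at this
  simpa [Fintype.prod_ite_eq'] using this

theorem setIntegral_cube_sub_center_mul_of_ne [Fintype ι] (hh : 0 ≤ h) {i k : ι} (hik : i ≠ k) :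
    ∫ x in cube c h, (x i - c i) * (x k - c k) = 0 := by
  classical
  have := setIntegral_cube_prod (c := c) (h := h) fun j t =>
    (if j = i then t - c i else 1) * (if j = k then t - c k else 1)
  rw [Finset.prod_eq_zero (Finset.mem_univ i)
    (by simpa [hik] using integral_Icc_sub_center _ hh)] at this
  simpa only [Finset.prod_mul_distrib, Fintype.prod_ite_eq'] using this

theorem setIntegral_cube_sub_center_sq [Fintype ι] (hh : 0 ≤ h) (i : ι) :
    ∫ x in cube c h, (x i - c i) ^ 2 = h ^ Fintype.card ι * (h ^ 2 / 12) := by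
  classical
  have := setIntegral_cube_prod (c := c) (h := h) fun j t => if j = i then (t - c i) ^ 2 else 1
  have hfactor : ∀ j, (∫ t in Icc (c j - h / 2) (c j + h / 2),
      if j = i then (t - c i) ^ 2 else 1) = h * if j = i then h ^ 2 / 12 else 1 := by
    intro j
    split_ifs with hj
    · subst hj; rw [integral_Icc_sub_center_sq _ hh]; ring
    · rw [integral_Icc_const_one _ hh, mul_one]
  simp only [hfactor, Finset.prod_mul_distrib, Fintype.prod_ite_eq', Finset.prod_const,
    Finset.card_univ] at this
  simpa using this

end Cube

noncomputable section Fit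

variable {ι : Type*} [Fintype ι] (c : ι → ℝ) (h : ℝ)

def cubeFitConst (f : (ι → ℝ) → ℝ) : ℝ := (1 / h ^ Fintype.card ι) * ∫ x in cube c h, f x

def cubeFitSlope (f : (ι → ℝ) → ℝ) (i : ι) : ℝ :=
  (∫ x in cube c h, (f x - cubeFitConst c h f) * (x i - c i)) / ∫ x in cube c h, (x i - c i) ^ 2

def cubeFit (f : (ι → ℝ) → ℝ) (x : ι → ℝ) : ℝ :=
  cubeFitConst c h f + ∑ i, cubeFitSlope c h f i * (x i - c i)

variable {c h} {f g : (ι → ℝ) → ℝ}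

theorem MeasureTheory.IntegrableOn.mul_sub_center (hf : IntegrableOn f (cube c h)) (i : ι) :
    IntegrableOn (fun x => f x * (x i - c i)) (cube c h) :=
  hf.mul_continuousOn (by fun_prop) isCompact_cube

theorem cubeFitSlope_eq (hh : 0 ≤ h) (hf : IntegrableOn f (cube c h)) (i : ι) :
    cubeFitSlope c h f i =
      (∫ x in cube c h, f x * (x i - c i)) / (h ^ Fintype.card ι * (h ^ 2 / 12)) := by
  rw [cubeFitSlope, setIntegral_cube_sub_center_sq hh]
  simp_rw [sub_mul]
  rw [integral_sub (hf.mul_sub_center i) (by fun_prop : Continuous _).integrableOn_cube,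
    integral_const_mul, setIntegral_cube_sub_center hh, mul_zero, sub_zero]

theorem cubeFitConst_sub (hf : IntegrableOn f (cube c h)) (hg : IntegrableOn g (cube c h)) :
    cubeFitConst c h (f - g) = cubeFitConst c h f - cubeFitConst c h g := by
  simp only [cubeFitConst, Pi.sub_apply, integral_sub hf hg, mul_sub]

theorem cubeFitSlope_sub (hh : 0 ≤ h) (hf : IntegrableOn f (cube c h))
    (hg : IntegrableOn g (cube c h)) (i : ι) :
    cubeFitSlope c h (f - g) i = cubeFitSlope c h f i - cubeFitSlope c h g i := by
  simp only [cubeFitSlope_eq hh (hf.sub hg), cubeFitSlope_eq hh hf, cubeFitSlope_eq hh hg,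
    Pi.sub_apply, sub_mul, integral_sub (hf.mul_sub_center i) (hg.mul_sub_center i), sub_div]

theorem cubeFit_sub (hh : 0 ≤ h) (hf : IntegrableOn f (cube c h))
    (hg : IntegrableOn g (cube c h)) :
    cubeFit c h (f - g) = cubeFit c h f - cubeFit c h g := by
  ext x
  simp only [cubeFit, Pi.sub_apply, cubeFitConst_sub hf hg, cubeFitSlope_sub hh hf hg, sub_mul,
    Finset.sum_sub_distrib]
  ring

theorem cubeFit_affine (hh : 0 < h) (a : ℝ) (φ : (ι → ℝ) →L[ℝ] ℝ) :
    cubeFit c h (fun y => a + φ (y - c)) = fun y => a + φ (y - c) := by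
  classical
  set b : ι → ℝ := fun j => φ fun k => if j = k then 1 else 0
  have hφ : ∀ y, φ (y - c) = ∑ j, b j * (y j - c j) := fun y => by
    rw [← φ.coe_coe, LinearMap.pi_apply_eq_sum_univ]
    simp [b, mul_comm]
  have hint : ∫ x in cube c h, (a + φ (x - c)) = a * h ^ Fintype.card ι := by
    simp_rw [hφ]
    rw [integral_add (by fun_prop : Continuous _).integrableOn_cube
      (by fun_prop : Continuous _).integrableOn_cube, setIntegral_const, volume_real_cube hh.le,
      integral_finsetSum _ fun j _ => (by fun_prop : Continuous _).integrableOn_cube]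
    simp only [integral_const_mul, setIntegral_cube_sub_center hh.le, mul_zero,
      Finset.sum_const_zero, add_zero, smul_eq_mul]
    ring
  have hmoment : ∀ i, ∫ x in cube c h, (a + φ (x - c)) * (x i - c i) =
      b i * (h ^ Fintype.card ι * (h ^ 2 / 12)) := fun i => by
    simp_rw [hφ, add_mul, Finset.sum_mul, mul_assoc]
    rw [integral_add (by fun_prop : Continuous _).integrableOn_cube
      (by fun_prop : Continuous _).integrableOn_cube,
      integral_finsetSum _ fun j _ => (by fun_prop : Continuous _).integrableOn_cube]
    simp only [integral_const_mul, setIntegral_cube_sub_center hh.le, mul_zero, zero_add]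
    rw [Finset.sum_eq_single i (fun j _ hji => by
        rw [setIntegral_cube_sub_center_mul_of_ne hh.le hji, mul_zero])
      (by simp)]
    simp only [← sq, setIntegral_cube_sub_center_sq hh.le]
  ext y
  rw [cubeFit, cubeFitConst, hint,
    Finset.sum_congr rfl fun i _ => by
      rw [cubeFitSlope_eq hh.le (by fun_prop : Continuous _).integrableOn_cube, hmoment]]
  field_simp
  rw [hφ]

theorem abs_cubeFitConst_le (hh : 0 < h) {M : ℝ} (hg : ∀ y ∈ cube c h, |g y| ≤ M) :
    |cubeFitConst c h g| ≤ M := by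
  have hpos : 0 < h ^ Fintype.card ι := by positivity
  have hint : ‖∫ x in cube c h, g x‖ ≤ M * volume.real (cube c h) :=
    norm_setIntegral_le_of_norm_le_const volume_cube_lt_top hg
  rw [volume_real_cube hh.le, Real.norm_eq_abs] at hint
  rw [cubeFitConst, abs_mul, abs_of_pos (by positivity), one_div, inv_mul_le_iff₀ hpos]
  linarith

theorem abs_cubeFitSlope_le (hh : 0 < h) (hgi : IntegrableOn g (cube c h)) {M : ℝ}
    (hg : ∀ y ∈ cube c h, |g y| ≤ M) (i : ι) : |cubeFitSlope c h g i| ≤ 6 * M / h := by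
  have hint : ‖∫ x in cube c h, g x * (x i - c i)‖ ≤ M * (h / 2) * volume.real (cube c h) :=
    norm_setIntegral_le_of_norm_le_const volume_cube_lt_top fun y hy => by
      rw [Real.norm_eq_abs, abs_mul]
      exact mul_le_mul (hg y hy) (abs_sub_le_of_mem_cube hy i) (abs_nonneg _)
        ((abs_nonneg _).trans (hg y hy))
  rw [volume_real_cube hh.le, Real.norm_eq_abs] at hint
  have hS : 0 < h ^ Fintype.card ι * (h ^ 2 / 12) := by positivity
  rw [cubeFitSlope_eq hh.le hgi, abs_div, abs_of_pos hS, div_le_div_iff₀ hS hh]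
  nlinarith [mul_le_mul_of_nonneg_right hint hh.le]

theorem abs_sub_cubeFit_le (hh : 0 < h) (hgi : IntegrableOn g (cube c h)) {M : ℝ}
    (hg : ∀ y ∈ cube c h, |g y| ≤ M) {x : ι → ℝ} (hx : x ∈ cube c h) :
    |g x - cubeFit c h g x| ≤ (2 + 3 * Fintype.card ι) * M := by
  have hslope : ∀ i, |cubeFitSlope c h g i * (x i - c i)| ≤ 3 * M := fun i => by
    rw [abs_mul]
    calc |cubeFitSlope c h g i| * |x i - c i| ≤ 6 * M / h * (h / 2) :=
          mul_le_mul (abs_cubeFitSlope_le hh hgi hg i) (abs_sub_le_of_mem_cube hx i)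
            (abs_nonneg _) ((abs_nonneg _).trans (abs_cubeFitSlope_le hh hgi hg i))
      _ = 3 * M := by field_simp; ring
  have hsum : |∑ i, cubeFitSlope c h g i * (x i - c i)| ≤ Fintype.card ι * (3 * M) :=
    (Finset.abs_sum_le_sum_abs _ _).trans <| by
      simpa using Finset.sum_le_sum fun i (_ : i ∈ Finset.univ) => hslope i
  have hconst := abs_cubeFitConst_le hh hg
  have hgx := hg x hx
  have htri := abs_add_le (cubeFitConst c h g) (∑ i, cubeFitSlope c h g i * (x i - c i))
  have := abs_sub (g x) (cubeFit c h g x)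
  rw [cubeFit] at this ⊢
  linarith

end Fit

theorem abs_sub_taylor_le_of_mem_cube {ι : Type*} [Fintype ι] {c : ι → ℝ} {h L : ℝ}
    (hh : 0 ≤ h) (hL : 0 ≤ L) {f : (ι → ℝ) → ℝ}
    (hf : ∀ y ∈ cube c h, |f y - f c - fderiv ℝ f c (y - c)| ≤ L * ‖y - c‖ ^ 2)
    {y : ι → ℝ} (hy : y ∈ cube c h) :
    |f y - (f c + fderiv ℝ f c (y - c))| ≤ L * h ^ 2 / 4 :=
  calc |f y - (f c + fderiv ℝ f c (y - c))| ≤ L * ‖y - c‖ ^ 2 := by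
        rw [← sub_sub]; exact hf y hy
    _ ≤ L * (h / 2) ^ 2 := by gcongr; exact norm_sub_le_of_mem_cube hh hy
    _ = L * h ^ 2 / 4 := by ring

theorem stmt_2_general (d : ℕ) (hd : 1 ≤ d) (L h : ℝ) (hL : 0 < L) (hh : 0 < h)
    (c : Fin d → ℝ) (f : (Fin d → ℝ) → ℝ)
    (B : Set (Fin d → ℝ))
    (hB : B = Icc (fun j => c j - h / 2) (fun j => c j + h / 2))
    (hdiff : Differentiable ℝ f)
    (hsmooth : ∀ x₁ ∈ B, ∀ x₂ ∈ B,
      |f x₁ - f x₂ - fderiv ℝ f x₂ (x₁ - x₂)| ≤ L * ‖x₁ - x₂‖ ^ 2)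
    (θ₀ : ℝ) (hθ₀ : θ₀ = (1 / h ^ d) * ∫ x in B, f x)
    (θ : Fin d → ℝ)
    (hθ : ∀ i, θ i =
      (∫ x in B, (f x - θ₀) * (x i - c i)) / (∫ x in B, (x i - c i) ^ 2)) :
    ∀ x ∈ B, |f x - θ₀ - ∑ i, θ i * (x i - c i)| ≤ (4 * Real.sqrt 3 + 1) * L * d * h ^ 2 := by
  obtain rfl : B = cube c h := hB
  obtain rfl : θ₀ = cubeFitConst c h f := by rw [hθ₀, cubeFitConst, Fintype.card_fin]
  obtain rfl : θ = cubeFitSlope c h f := funext hθ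
  set A : (Fin d → ℝ) → ℝ := fun y => f c + fderiv ℝ f c (y - c)
  have hfi : IntegrableOn f (cube c h) := hdiff.continuous.integrableOn_cube
  have hAi : IntegrableOn A (cube c h) := (by fun_prop : Continuous A).integrableOn_cube
  have hTaylor : ∀ y ∈ cube c h, |(f - A) y| ≤ L * h ^ 2 / 4 := fun _ hy =>
    abs_sub_taylor_le_of_mem_cube hh.le hL.le
      (fun y hy' => hsmooth y hy' c (center_mem_cube hh.le)) hy
  intro x hx
  have hresidual : f x - cubeFitConst c h f - ∑ i, cubeFitSlope c h f i * (x i - c i) =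
      (f - A) x - cubeFit c h (f - A) x := by
    rw [cubeFit_sub hh.le hfi hAi, cubeFit_affine hh]
    simp only [cubeFit, Pi.sub_apply]
    ring
  have hd' : (1 : ℝ) ≤ d := by exact_mod_cast hd
  have hsqrt : 1 ≤ Real.sqrt 3 := Real.one_le_sqrt.2 (by norm_num)
  calc |f x - cubeFitConst c h f - ∑ i, cubeFitSlope c h f i * (x i - c i)|
      ≤ (2 + 3 * d) * (L * h ^ 2 / 4) := by
        simpa [hresidual] using abs_sub_cubeFit_le hh (hfi.sub hAi) hTaylor hx
    _ ≤ (4 * Real.sqrt 3 + 1) * L * d * h ^ 2 := by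
        have hLh : 0 ≤ L * h ^ 2 := by positivity
        nlinarith [mul_nonneg (sub_nonneg.2 hd') hLh,
          mul_nonneg (mul_nonneg (sub_nonneg.2 hsqrt) (by positivity : (0 : ℝ) ≤ d)) hLh]

theorem stmt_2 (d : ℕ) (hd : 1 ≤ d) (L h : ℝ) (hL : 0 < L) (hh : 0 < h)
    (c : Fin d → ℝ) (f : (Fin d → ℝ) → ℝ)
    (B : Set (Fin d → ℝ))
    (hB : B = Icc (fun j => c j - h / 2) (fun j => c j + h / 2))
    (hBsub : B ⊆ Icc 0 1)
    (hdiff : Differentiable ℝ f)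
    (hsmooth : ∀ x₁ ∈ B, ∀ x₂ ∈ B,
      |f x₁ - f x₂ - fderiv ℝ f x₂ (x₁ - x₂)| ≤ L * ‖x₁ - x₂‖ ^ 2)
    (θ₀ : ℝ) (hθ₀ : θ₀ = (1 / h ^ d) * ∫ x in B, f x)
    (θ : Fin d → ℝ)
    (hθ : ∀ i, θ i =
      (∫ x in B, (f x - θ₀) * (x i - c i)) / (∫ x in B, (x i - c i) ^ 2)) :
    ∀ x ∈ B, |f x - θ₀ - ∑ i, θ i * (x i - c i)| ≤ (4 * Real.sqrt 3 + 1) * L * d * h ^ 2 :=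
  stmt_2_general d hd L h hL hh c f B hB hdiff hsmooth θ₀ hθ₀ θ hθ
end

section
/- Let f : [0,1]^d → ℝ be continuously differentiable on a cube B with side length h and center c, and suppose ∂f/∂x_i(x) ≥ C > 0 for all x ∈ B. Then the best-linear-approximation coefficient θ_i = (∫_B (f(x)−θ₀)(x_i−c_i) dx)/(∫_B (x_i−c_i)² dx), where θ₀ = (1/h^d)∫_B f(x) dx, satisfies θ_i ≥ C. -/
/-!
Since `∂ᵢf ≥ C` on the box, `g = f - θ₀ - C (xᵢ - cᵢ)` is nondecreasing in `xᵢ`, and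
`θᵢ - C = ∫ g (xᵢ - cᵢ) / ∫ (xᵢ - cᵢ)²`. The reflection `σ` of the box across the hyperplane
`xᵢ = cᵢ` preserves volume, so `2 ∫ g (xᵢ - cᵢ) = ∫ (g x - g (σ x)) (xᵢ - cᵢ)`, and the last
integrand is nonnegative by monotonicity.
-/

open Set MeasureTheory Function

theorem update_mem_Icc {ι : Type*} [DecidableEq ι] {α : ι → Type*} [∀ j, Preorder (α j)]
    {a b x : ∀ j, α j} (hx : x ∈ Icc a b) {i : ι} {t : α i} (ht : t ∈ Icc (a i) (b i)) :
    update x i t ∈ Icc a b := by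
  rw [← pi_univ_Icc] at hx ⊢
  exact (update_mem_pi_iff_of_mem hx).2 fun _ => ht

variable {ι : Type*}

theorem setIntegral_Icc_sub_sq_pos [Fintype ι] {a b : ι → ℝ} (hab : ∀ j, a j < b j) (i : ι)
    (m : ℝ) :
    0 < ∫ x in Icc a b, (x i - m) ^ 2 := by
  rw [setIntegral_pos_iff_support_of_nonneg_ae (ae_of_all _ fun x => sq_nonneg _)
    ((by fun_prop : Continuous fun x : ι → ℝ => (x i - m) ^ 2).integrableOn_Icc)]
  have hsupp : support (fun x : ι → ℝ => (x i - m) ^ 2) = {x | x i = m}ᶜ := by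
    ext x; simp [sub_eq_zero]
  have hnull : volume {x : ι → ℝ | x i = m} = 0 := by
    rw [volume_pi]; exact Measure.pi_hyperplane (fun _ : ι => (volume : Measure ℝ)) i m
  rw [hsupp, inter_comm, measure_inter_conull (by rwa [compl_compl]), Real.volume_Icc_pi]
  exact CanonicallyOrderedAdd.prod_pos.2 fun j _ => ENNReal.ofReal_pos.2 (sub_pos.2 (hab j))

section Reflection

variable [DecidableEq ι] (i : ι) (m : ℝ)

def reflectCoord (x : ι → ℝ) : ι → ℝ := update x i (2 * m - x i)

@[simp]
theorem reflectCoord_apply_self (x : ι → ℝ) : reflectCoord i m x i = 2 * m - x i :=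
  update_self i _ x

theorem reflectCoord_involutive : Involutive (reflectCoord i m) := fun x => by
  simp [reflectCoord]

theorem continuous_reflectCoord : Continuous (reflectCoord i m) := by
  unfold reflectCoord; fun_prop

theorem reflectCoord_mem_Icc {a b x : ι → ℝ} (hx : x ∈ Icc a b) :
    reflectCoord i ((a i + b i) / 2) x ∈ Icc a b := by
  have hxi : x i ∈ Icc (a i) (b i) := ⟨hx.1 i, hx.2 i⟩
  have hrefl : 2 * ((a i + b i) / 2) - x i ∈ Icc (a i) (b i) := by
    constructor <;> linarith [hxi.1, hxi.2]
  exact update_mem_Icc hx hrefl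

theorem preimage_reflectCoord_Icc (a b : ι → ℝ) :
    reflectCoord i ((a i + b i) / 2) ⁻¹' Icc a b = Icc a b :=
  Subset.antisymm (fun x hx => reflectCoord_involutive i _ x ▸ reflectCoord_mem_Icc i hx)
    fun _ => reflectCoord_mem_Icc i

variable [Fintype ι]

theorem measurePreserving_reflectCoord :
    MeasurePreserving (reflectCoord i m) := by
  have hcoord : ∀ j : ι, MeasurePreserving
      (if j = i then (2 * m - ·) else id : ℝ → ℝ) := fun j => by
    split_ifs
    · exact Measure.measurePreserving_sub_left volume (2 * m)
    · exact MeasurePreserving.id volume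
  convert volume_pi (ι := ι) (α := fun _ => ℝ) ▸
    measurePreserving_pi (fun _ => volume) (fun _ => volume) hcoord using 1
  funext x j
  by_cases hj : j = i
  · subst hj; simp [reflectCoord]
  · simp [reflectCoord, hj]

theorem measurableEmbedding_reflectCoord : MeasurableEmbedding (reflectCoord i m) :=
  let e : (ι → ℝ) ≃ᵐ (ι → ℝ) :=
    { toEquiv := (reflectCoord_involutive i m).toPerm
      measurable_toFun := (continuous_reflectCoord i m).measurable
      measurable_invFun := (continuous_reflectCoord i m).measurable }
  e.measurableEmbedding

theorem integrableOn_comp_reflectCoord_Icc {a b : ι → ℝ} {F : (ι → ℝ) → ℝ}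
    (hF : IntegrableOn F (Icc a b)) :
    IntegrableOn (fun x => F (reflectCoord i ((a i + b i) / 2) x)) (Icc a b) := by
  have := ((measurePreserving_reflectCoord i ((a i + b i) / 2)).integrableOn_comp_preimage
    (measurableEmbedding_reflectCoord i _)).2 hF
  rwa [preimage_reflectCoord_Icc] at this

theorem setIntegral_comp_reflectCoord_Icc (a b : ι → ℝ) (F : (ι → ℝ) → ℝ) :
    ∫ x in Icc a b, F (reflectCoord i ((a i + b i) / 2) x) = ∫ x in Icc a b, F x := by
  conv_lhs => rw [← preimage_reflectCoord_Icc i a b]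
  exact (measurePreserving_reflectCoord i _).setIntegral_preimage_emb
    (measurableEmbedding_reflectCoord i _) F _

end Reflection

section Monotone

variable [Fintype ι] [DecidableEq ι]

theorem integral_mul_sub_midpoint_nonneg_of_monotoneOn {a b : ι → ℝ} {i : ι}
    {g : (ι → ℝ) → ℝ} (hg : IntegrableOn (fun x => g x * (x i - (a i + b i) / 2)) (Icc a b))
    (hmono : ∀ x ∈ Icc a b, MonotoneOn (fun t => g (update x i t)) (Icc (a i) (b i))) :
    0 ≤ ∫ x in Icc a b, g x * (x i - (a i + b i) / 2) := by
  set m := (a i + b i) / 2 with hm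
  set F : (ι → ℝ) → ℝ := fun x => g x * (x i - m)
  have hpair : ∀ x ∈ Icc a b, 0 ≤ F x + F (reflectCoord i m x) := by
    intro x hx
    have hxi : x i ∈ Icc (a i) (b i) := ⟨hx.1 i, hx.2 i⟩
    have hrefl : 2 * m - x i ∈ Icc (a i) (b i) := by
      constructor <;> linarith [hxi.1, hxi.2, hm]
    have key := ((hmono x hx).monovaryOn monotoneOn_id).sub_mul_sub_nonneg hrefl hxi
    simp only [update_eq_self, id] at key
    have : F x + F (reflectCoord i m x) =
        (g x - g (update x i (2 * m - x i))) * (x i - (2 * m - x i)) / 2 := by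
      simp only [F, reflectCoord_apply_self]; unfold reflectCoord; ring
    rw [this]; positivity
  have hsum : 0 ≤ ∫ x in Icc a b, (F x + F (reflectCoord i m x)) :=
    setIntegral_nonneg measurableSet_Icc hpair
  have hFσ : IntegrableOn (fun x => F (reflectCoord i m x)) (Icc a b) :=
    integrableOn_comp_reflectCoord_Icc i hg
  rw [integral_add hg hFσ, setIntegral_comp_reflectCoord_Icc] at hsum
  change 0 ≤ ∫ x in Icc a b, F x
  linarith

theorem monotoneOn_update_sub_mul_of_le_fderiv {f : (ι → ℝ) → ℝ} (hf : Differentiable ℝ f)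
    {a b : ι → ℝ} {i : ι} {C : ℝ} (hder : ∀ x ∈ Icc a b, C ≤ fderiv ℝ f x (Pi.single i 1))
    {x : ι → ℝ} (hx : x ∈ Icc a b) :
    MonotoneOn (fun t => f (update x i t) - C * t) (Icc (a i) (b i)) := by
  have hderiv : ∀ t, HasDerivAt (fun t => f (update x i t) - C * t)
      (fderiv ℝ f (update x i t) (Pi.single i 1) - C) t := fun t => by
    have := ((hf _).hasFDerivAt.comp_hasDerivAt t (hasDerivAt_update x i t)).sub
      ((hasDerivAt_id t).const_mul C)
    rwa [mul_one] at this
  refine monotoneOn_of_deriv_nonneg (convex_Icc _ _)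
    (fun t _ => (hderiv t).continuousAt.continuousWithinAt)
    (fun t _ => (hderiv t).differentiableAt.differentiableWithinAt) fun t ht => ?_
  rw [(hderiv t).deriv, sub_nonneg]
  exact hder _ (update_mem_Icc hx (interior_subset ht))

end Monotone

theorem stmt_3_general (d : ℕ) (i : Fin d) (C h : ℝ) (hh : 0 < h)
    (c : Fin d → ℝ) (f : (Fin d → ℝ) → ℝ)
    (B : Set (Fin d → ℝ))
    (hB : B = Icc (fun j => c j - h / 2) (fun j => c j + h / 2))
    (hf : ContDiff ℝ 1 f)
    (hder : ∀ x ∈ B, C ≤ fderiv ℝ f x (Pi.single i 1))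
    (θ₀ θi : ℝ)
    (hθi : θi = (∫ x in B, (f x - θ₀) * (x i - c i)) / (∫ x in B, (x i - c i) ^ 2)) :
    C ≤ θi := by
  subst hB hθi
  set a : Fin d → ℝ := fun j => c j - h / 2
  set b : Fin d → ℝ := fun j => c j + h / 2
  have hmid : (a i + b i) / 2 = c i := by simp only [a, b]; ring
  have hfc : Continuous f := hf.continuous
  set g : (Fin d → ℝ) → ℝ := fun x => f x - θ₀ - C * (x i - c i)
  have hmono (x) (hx : x ∈ Icc a b) : MonotoneOn (fun t => g (update x i t)) (Icc (a i) (b i)) :=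
    ((monotoneOn_update_sub_mul_of_le_fderiv (hf.differentiable one_ne_zero) hder hx).add_const
      (C * c i - θ₀)).congr fun t _ => by simp only [g, update_self]; ring
  have hcov : 0 ≤ ∫ x in Icc a b, g x * (x i - c i) := by
    rw [← hmid]
    exact integral_mul_sub_midpoint_nonneg_of_monotoneOn
      (Continuous.integrableOn_Icc (by fun_prop)) hmono
  have hsplit : ∫ x in Icc a b, (f x - θ₀) * (x i - c i) =
      (∫ x in Icc a b, g x * (x i - c i)) + C * ∫ x in Icc a b, (x i - c i) ^ 2 := by
    rw [← integral_const_mul, ← integral_add (Continuous.integrableOn_Icc (by fun_prop))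
      (Continuous.integrableOn_Icc (by fun_prop))]
    congr with x
    ring
  have hvar : 0 < ∫ x in Icc a b, (x i - c i) ^ 2 :=
    setIntegral_Icc_sub_sq_pos (fun j => by simp only [a, b]; linarith) i (c i)
  rw [le_div_iff₀ hvar, hsplit]
  linarith

theorem stmt_3 (d : ℕ) (hd : 1 ≤ d) (i : Fin d) (C h : ℝ) (hC : 0 < C) (hh : 0 < h)
    (c : Fin d → ℝ) (f : (Fin d → ℝ) → ℝ)
    (B : Set (Fin d → ℝ))
    (hB : B = Icc (fun j => c j - h / 2) (fun j => c j + h / 2))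
    (hf : ContDiff ℝ 1 f)
    (hder : ∀ x ∈ B, C ≤ fderiv ℝ f x (Pi.single i 1))
    (θ₀ θi : ℝ)
    (hθ₀ : θ₀ = (1 / h ^ d) * ∫ x in B, f x)
    (hθi : θi = (∫ x in B, (f x - θ₀) * (x i - c i)) / (∫ x in B, (x i - c i) ^ 2)) :
    C ≤ θi :=
  stmt_3_general d i C h hh c f B hB hf hder θ₀ θi hθi
end

section
/- Fix ξ ∈ (0,1) and p₁,…,p_m ∈ (0,1] with at least one p_j < ξ. Consider minimizing V(η,w) = exp(Σ_j (e^{η w_j} − 1) p_j − η ξ) over η ≥ 0 and w ∈ ℝ^m with w_j ≥ 0 and Σ w_j = 1. The minimum is attained at η* = Σ_{j : p_j < ξ} (log ξ − log p_j), w_j* = (log ξ − log p_j)/η* if p_j < ξ and w_j* = 0 otherwise, and the minimum value equals exp(Σ_{j : p_j < ξ} (ξ − ξ log ξ − p_j + ξ log p_j)). -/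
lemma key_ineq (ξ p t : ℝ) (hξ : 0 < ξ) (hp : 0 < p) (ht : 0 ≤ t) :
    (if p < ξ then ξ - ξ * Real.log ξ - p + ξ * Real.log p else 0) ≤
      (Real.exp t - 1) * p - t * ξ := by
  split_ifs with h
  · have hx : (0:ℝ) < p * Real.exp t := by positivity
    have h1 : Real.log (p * Real.exp t) - Real.log ξ + 1 ≤ (p * Real.exp t) / ξ := by
      have := Real.add_one_le_exp (Real.log (p * Real.exp t) - Real.log ξ)
      rwa [Real.exp_sub, Real.exp_log hx, Real.exp_log hξ] at this
    have h2 : (Real.log (p * Real.exp t) - Real.log ξ + 1) * ξ ≤ p * Real.exp t :=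
      (le_div_iff₀ hξ).1 h1
    have hlog : Real.log (p * Real.exp t) = Real.log p + t := by
      rw [Real.log_mul hp.ne' (Real.exp_pos t).ne', Real.log_exp]
    rw [hlog] at h2
    nlinarith
  · have h1 : t + 1 ≤ Real.exp t := Real.add_one_le_exp t
    have h2 : ξ ≤ p := not_lt.1 h
    nlinarith

theorem stmt_11 (m : ℕ) (hm : 1 ≤ m) (ξ : ℝ) (hξ0 : 0 < ξ) (hξ1 : ξ < 1)
    (p : Fin m → ℝ) (hp : ∀ j, 0 < p j ∧ p j ≤ 1)
    (hex : ∃ j, p j < ξ)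
    (V : ℝ → (Fin m → ℝ) → ℝ)
    (hV : ∀ η w, V η w = Real.exp (∑ j, (Real.exp (η * w j) - 1) * p j - η * ξ))
    (ηs : ℝ) (hηs : ηs = ∑ j, if p j < ξ then Real.log ξ - Real.log (p j) else 0)
    (ws : Fin m → ℝ)
    (hws : ∀ j, ws j = if p j < ξ then (Real.log ξ - Real.log (p j)) / ηs else 0) :
    (0 ≤ ηs) ∧ (∀ j, 0 ≤ ws j) ∧ (∑ j, ws j = 1) ∧
    (∀ η ≥ (0 : ℝ), ∀ w : Fin m → ℝ, (∀ j, 0 ≤ w j) → (∑ j, w j = 1) →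
      V ηs ws ≤ V η w) ∧
    V ηs ws =
      Real.exp (∑ j, if p j < ξ then ξ - ξ * Real.log ξ - p j + ξ * Real.log (p j) else 0) := by
  have hterm : ∀ j, 0 ≤ (if p j < ξ then Real.log ξ - Real.log (p j) else 0) := by
    intro j
    split_ifs with h
    · linarith [Real.log_lt_log (hp j).1 h]
    · exact le_rfl
  have hηpos : 0 < ηs := by
    rw [hηs]
    obtain ⟨j0, hj0⟩ := hex
    refine Finset.sum_pos' (fun j _ => hterm j) ⟨j0, Finset.mem_univ _, ?_⟩
    simp only [if_pos hj0]
    linarith [Real.log_lt_log (hp j0).1 hj0]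
  have hwsnn : ∀ j, 0 ≤ ws j := by
    intro j
    rw [hws j]
    split_ifs with h
    · exact div_nonneg (by linarith [Real.log_lt_log (hp j).1 h]) hηpos.le
    · exact le_rfl
  have hwsum : ∑ j, ws j = 1 := by
    have : ∀ j, ws j = (if p j < ξ then Real.log ξ - Real.log (p j) else 0) / ηs := by
      intro j; rw [hws j]; split_ifs <;> simp
    rw [Finset.sum_congr rfl (fun j _ => this j), ← Finset.sum_div, ← hηs,
      div_self hηpos.ne']
  have hmul : ∀ j, ηs * ws j = (if p j < ξ then Real.log ξ - Real.log (p j) else 0) := by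
    intro j; rw [hws j]; split_ifs with h
    · rw [mul_div_cancel₀ _ hηpos.ne']
    · ring
  have hval : V ηs ws =
      Real.exp (∑ j, if p j < ξ then ξ - ξ * Real.log ξ - p j + ξ * Real.log (p j) else 0) := by
    rw [hV]
    congr 1
    have hηξ : ηs * ξ = ∑ j, (if p j < ξ then Real.log ξ - Real.log (p j) else 0) * ξ := by
      rw [hηs, Finset.sum_mul]
    rw [hηξ, ← Finset.sum_sub_distrib]
    refine Finset.sum_congr rfl (fun j _ => ?_)
    rw [hmul j]
    split_ifs with h
    · rw [Real.exp_sub, Real.exp_log hξ0, Real.exp_log (hp j).1]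
      rw [sub_mul, div_mul_cancel₀ _ (hp j).1.ne']
      ring
    · simp
  refine ⟨hηpos.le, hwsnn, hwsum, ?_, hval⟩
  intro η hη w hw hwsum'
  rw [hval, hV]
  apply Real.exp_le_exp.2
  have hsum : η * ξ = ∑ j, η * w j * ξ := by
    rw [← Finset.sum_mul, ← Finset.mul_sum, hwsum', mul_one]
  rw [hsum, ← Finset.sum_sub_distrib]
  refine Finset.sum_le_sum (fun j _ => ?_)
  exact key_ineq ξ (p j) (η * w j) hξ0 (hp j).1 (mul_nonneg hη (hw j))
end
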